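/- Let W = ℕ and let R be the binary relation on ℕ given by: R 0 1; R 0 n and R n 0 for every n ≥ 2; and R n m for all 2 ≤ n < m. Then for the frame M = (W,R) we have M, ∅, 0 ⊨ Inf. In particular, Inf is satisfiable. -/
import Mathlib


/-- Formulas of the memory logic B(⟨r⟩,k):  F ::= k | ¬F | F ∧ F | ◇F. -/
inductive MForm : Type
  | known : MForm
  | neg : MForm → MForm
  | conj : MForm → MForm → MForm
  | dia : MForm → MForm
deriving DecidableEq

namespace MForm

def disj (φ ψ : MForm) : MForm := neg (conj (neg φ) (neg ψ))
def impl (φ ψ : MForm) : MForm := neg (conj φ (neg ψ))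
def box (φ : MForm) : MForm := neg (dia (neg φ))
def bot : MForm := conj known (neg known)
def top : MForm := disj known (neg known)

end MForm

/-- Satisfaction for B(⟨r⟩,k) on a Kripke frame (W, R), at state `w`, with memory `S`.
`◇` is the remember-and-move operator: the current state is added to the memory. -/
def MSat {W : Type*} (R : W → W → Prop) : Set W → W → MForm → Prop
  | S, w, .known => w ∈ S
  | S, w, .neg φ => ¬ MSat R S w φ
  | S, w, .conj φ ψ => MSat R S w φ ∧ MSat R S w ψ
  | S, w, .dia φ => ∃ t, R w t ∧ MSat R (S ∪ {w}) t φ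

/-- A formula is satisfiable iff it holds at some state of some frame with empty initial memory. -/
def MSatisfiable (φ : MForm) : Prop :=
  ∃ (W : Type) (R : W → W → Prop) (s : W), MSat R ∅ s φ

namespace MForm

/-- The macro s ≡ ◇□⊥ : "the current state sees a dead end". -/
def sees : MForm := dia (box bot)

/-- a-or-b ≡ k ∧ ◇(k ∧ ¬s). -/
def aorb : MForm := conj known (dia (conj known (neg sees)))

/-- c ≡ k ∧ □(k → s). -/
def cmac : MForm := conj known (box (impl known sees))

/-- The formula `Inf`, the conjunction of the seven conjuncts (1)–(7). -/
def infF : MForm :=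
  conj sees <|                                                              -- (1) s
  conj (box (neg sees)) <|                                                  -- (2) □¬s
  conj (box (box (impl known sees))) <|                                     -- (3) □□(k → s)
  conj (dia (dia known)) <|                                                 -- (4) ◇◇k
  conj (box (impl (dia top) (dia (conj (neg known) (neg sees))))) <|        -- (5)
  conj (box (box (impl (neg sees)
        (dia (conj known (conj sees (dia (conj known (box (impl known sees)))))))))) <|  -- (6)
  box (box (impl (neg sees) (box (impl (neg sees)
        (dia (conj known (conj sees (box (impl aorb (dia cmac))))))))))     -- (7)

end MForm

/-- A state `x` "sees a dead end": some successor of `x` has no successor. -/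
def seesDeadEnd {W : Type*} (R : W → W → Prop) (x : W) : Prop :=
  ∃ y, R x y ∧ ∀ z, ¬ R y z

/-- The relation on W = ℕ: R 0 1; R 0 n and R n 0 for every n ≥ 2; R n m for all 2 ≤ n < m. -/
def Rinf : ℕ → ℕ → Prop := fun a b =>
  (a = 0 ∧ b = 1) ∨ (a = 0 ∧ 2 ≤ b) ∨ (2 ≤ a ∧ b = 0) ∨ (2 ≤ a ∧ a < b)

lemma rinf_zero_iff (b : ℕ) : Rinf 0 b ↔ b = 1 ∨ 2 ≤ b := by
  unfold Rinf; omega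

lemma rinf_dead_iff (y : ℕ) : (∀ z, ¬ Rinf y z) ↔ y = 1 := by
  constructor
  · intro h
    by_contra hy
    rcases Nat.eq_zero_or_pos y with h0 | h0
    · exact h 1 (by unfold Rinf; omega)
    · exact h 0 (by unfold Rinf; omega)
  · rintro rfl z; unfold Rinf; omega

lemma rinf_to_one (x : ℕ) : Rinf x 1 ↔ x = 0 := by unfold Rinf; omega

lemma rinf_ge (a b : ℕ) (h : 2 ≤ a) : Rinf a b ↔ b = 0 ∨ a < b := by unfold Rinf; omega

section
variable {W : Type*} (R : W → W → Prop) (S : Set W) (w : W) (φ ψ : MForm)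

lemma msat_known : MSat R S w MForm.known ↔ w ∈ S := Iff.rfl
lemma msat_neg : MSat R S w (MForm.neg φ) ↔ ¬ MSat R S w φ := Iff.rfl
lemma msat_conj : MSat R S w (MForm.conj φ ψ) ↔ MSat R S w φ ∧ MSat R S w ψ := Iff.rfl
lemma msat_dia : MSat R S w (MForm.dia φ) ↔ ∃ t, R w t ∧ MSat R (S ∪ {w}) t φ := Iff.rfl
lemma msat_box : MSat R S w (MForm.box φ) ↔ ∀ t, R w t → MSat R (S ∪ {w}) t φ := by
  simp only [MForm.box, msat_neg, msat_dia, not_exists, not_and, not_not]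
lemma msat_impl : MSat R S w (MForm.impl φ ψ) ↔ (MSat R S w φ → MSat R S w ψ) := by
  simp only [MForm.impl, msat_neg, msat_conj, not_and, not_not]
lemma msat_top : MSat R S w MForm.top := by
  simp only [MForm.top, MForm.disj, msat_neg, msat_conj]
  tauto

end

lemma msat_sees (S : Set ℕ) (x : ℕ) : MSat Rinf S x MForm.sees ↔ x = 0 := by
  rw [MForm.sees, msat_dia]
  constructor
  · rintro ⟨t, hxt, ht⟩
    rw [msat_box] at ht
    have ht' : ∀ z, ¬ Rinf t z := fun z hz =>
      absurd (ht z hz).1 (ht z hz).2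
    have := (rinf_dead_iff t).1 ht'
    subst this
    exact (rinf_to_one x).1 hxt
  · rintro rfl
    refine ⟨1, (rinf_to_one 0).2 rfl, ?_⟩
    rw [msat_box]
    intro z hz
    exact absurd hz ((rinf_dead_iff 1).2 rfl z)

lemma main0 : MSat Rinf ∅ 0 MForm.infF := by
  rw [MForm.infF]
  refine ⟨?_, ?_, ?_, ?_, ?_, ?_, ?_⟩
  · -- (1)
    exact (msat_sees _ _).2 rfl
  · -- (2)
    rw [msat_box]; intro t ht
    rw [msat_neg, msat_sees]
    rw [rinf_zero_iff] at ht; omega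
  · -- (3)
    rw [msat_box]; intro t ht
    rw [msat_box]; intro u hu
    rw [msat_impl, msat_known, msat_sees]
    intro humem
    rw [rinf_zero_iff] at ht
    simp only [Set.mem_union, Set.mem_singleton_iff, Set.mem_empty_iff_false, false_or] at humem
    rcases ht with rfl | ht
    · exact absurd hu ((rinf_dead_iff 1).2 rfl u)
    · rw [rinf_ge _ _ ht] at hu
      omega
  · -- (4)
    rw [msat_dia]
    refine ⟨2, by rw [rinf_zero_iff]; omega, ?_⟩
    rw [msat_dia]
    refine ⟨0, by rw [rinf_ge] <;> omega, ?_⟩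
    rw [msat_known]; simp
  · -- (5)
    rw [msat_box]; intro t ht
    rw [msat_impl, msat_dia, msat_dia]
    rintro ⟨u, htu, -⟩
    rw [rinf_zero_iff] at ht
    rcases ht with rfl | ht
    · exact absurd htu ((rinf_dead_iff 1).2 rfl u)
    · refine ⟨t + 1, by rw [rinf_ge _ _ ht]; omega, ?_⟩
      rw [msat_conj, msat_neg, msat_neg, msat_known, msat_sees]
      constructor
      · simp only [Set.mem_union, Set.mem_singleton_iff, Set.mem_empty_iff_false, false_or]
        omega
      · omega
  · -- (6)
    rw [msat_box]; intro t ht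
    rw [msat_box]; intro u hu
    rw [msat_impl, msat_neg, msat_sees]
    intro hu0
    rw [rinf_zero_iff] at ht
    rcases ht with rfl | ht
    · exact absurd hu ((rinf_dead_iff 1).2 rfl u)
    rw [rinf_ge _ _ ht] at hu
    rcases hu with rfl | hu
    · exact absurd rfl hu0
    -- t ≥ 2, u > t
    rw [msat_dia]
    refine ⟨0, by rw [rinf_ge] <;> omega, ?_⟩
    rw [msat_conj, msat_conj, msat_known, msat_sees]
    refine ⟨by simp, rfl, ?_⟩
    rw [msat_dia]
    refine ⟨u, by rw [rinf_zero_iff]; omega, ?_⟩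
    rw [msat_conj, msat_known]
    constructor
    · simp
    · rw [msat_box]; intro x hx
      rw [msat_impl, msat_known, msat_sees]
      intro hxmem
      simp only [Set.mem_union, Set.mem_singleton_iff, Set.mem_empty_iff_false, false_or] at hxmem
      rw [rinf_ge _ _ (by omega)] at hx
      omega
  · -- (7)
    rw [msat_box]; intro t ht
    rw [msat_box]; intro u hu
    rw [msat_impl, msat_neg, msat_sees]
    intro hu0
    rw [rinf_zero_iff] at ht
    rcases ht with rfl | ht
    · exact absurd hu ((rinf_dead_iff 1).2 rfl u)
    rw [rinf_ge _ _ ht] at hu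
    rcases hu with rfl | hu
    · exact absurd rfl hu0
    -- t ≥ 2, u > t
    rw [msat_box]; intro v hv
    rw [msat_impl, msat_neg, msat_sees]
    intro hv0
    rw [rinf_ge _ _ (by omega)] at hv
    rcases hv with rfl | hv
    · exact absurd rfl hv0
    -- v > u > t ≥ 2
    rw [msat_dia]
    refine ⟨0, by rw [rinf_ge] <;> omega, ?_⟩
    rw [msat_conj, msat_conj, msat_known, msat_sees]
    refine ⟨by simp, rfl, ?_⟩
    rw [msat_box]; intro x hx
    rw [msat_impl]
    intro haorb
    rw [MForm.aorb, msat_conj, msat_known, msat_dia] at haorb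
    obtain ⟨hxmem, y, hxy, hy⟩ := haorb
    rw [msat_conj, msat_known, msat_neg, msat_sees] at hy
    obtain ⟨hymem, hy0⟩ := hy
    simp only [Set.mem_union, Set.mem_singleton_iff, Set.mem_empty_iff_false, false_or] at hxmem hymem
    -- x ∈ {t,u,v} (x ≠ 0 since Rinf 0 x means x=1 or x≥2, and 0 successors exclude 0... need x≠0)
    rw [rinf_zero_iff] at hx
    have hx2 : 2 ≤ x := by
      rcases hx with rfl | hx
      · omega
      · exact hx
    rw [rinf_ge _ _ hx2] at hxy
    have hylt : y = t ∨ y = u ∨ y = v := by omega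
    have hxlt : x < v := by omega
    rw [MForm.cmac, msat_dia]
    refine ⟨v, by rw [rinf_ge _ _ hx2]; omega, ?_⟩
    rw [msat_conj, msat_known]
    constructor
    · simp
    · rw [msat_box]; intro z hz
      rw [msat_impl, msat_known, msat_sees]
      intro hzmem
      simp only [Set.mem_union, Set.mem_singleton_iff, Set.mem_empty_iff_false, false_or] at hzmem
      rw [rinf_ge _ _ (by omega)] at hz
      omega

/-- for the frame M = (ℕ, Rinf) we have M, ∅, 0 ⊨ Inf;
in particular Inf is satisfiable. -/
theorem inf_satisfied_at_zero :
    MSat Rinf ∅ 0 MForm.infF ∧ MSatisfiable MForm.infF := by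
  exact ⟨main0, ⟨ℕ, Rinf, 0, main0⟩⟩
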